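/- For every c ∈ ℤ² ⊆ G and every letter x ∈ X, ρ(c, x) = 1_G; hence ρ*(c, w) = 1_G for every c ∈ ℤ² and every nonempty word w over X. Moreover, for every nonempty finite word w over X, the unordered pair {(1,0)·w, (0,1)·w} equals the unordered pair {w, (1,1)·w} (equality of two-element sets of words). -/

import Mathlib

/-- The group `G = H × F(a,b) × ℤ × ℤ` (with `ℤ` written multiplicatively so that the product
carries a group structure). The free group on two generators is `FreeGroup Bool`, with
generators `a = .of false` and `b = .of true`. -/
abbrev GG (H : Type) : Type := H × FreeGroup Bool × Multiplicative ℤ × Multiplicative ℤ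

/-- The group `K = H × F(a,b) × ℤ`. -/
abbrev KK (H : Type) : Type := H × FreeGroup Bool × Multiplicative ℤ

/-- `π₁ : G → K`, `(h,f,n,m) ↦ (h,f,n)`. -/
def pi1 {H : Type} (g : GG H) : KK H := (g.1, g.2.1, g.2.2.1)

/-- `π₂ : G → K`, `(h,f,n,m) ↦ (h,f,m)`. -/
def pi2 {H : Type} (g : GG H) : KK H := (g.1, g.2.1, g.2.2.2)

/-- `ζ₁ : G → ℤ`, `(h,f,n,m) ↦ n`. -/
def zeta1 {H : Type} (g : GG H) : ℤ := Multiplicative.toAdd g.2.2.1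

/-- `ζ₂ : G → ℤ`, `(h,f,n,m) ↦ m`. -/
def zeta2 {H : Type} (g : GG H) : ℤ := Multiplicative.toAdd g.2.2.2

/-- The exponent sum of the generator `i` in an element of the free group on two generators. -/
def expSum (i : Bool) : FreeGroup Bool →* Multiplicative ℤ :=
  FreeGroup.lift (fun j => Multiplicative.ofAdd (if j = i then (1 : ℤ) else 0))

/-- `τ : G → G`, `(h,f,n,m) ↦ (1,1,|f|_a,|f|_b)`, the abelianization of `F` in `G`. -/
def tau {H : Type} [Group H] (g : GG H) : GG H :=
  (1, 1, expSum false g.2.1, expSum true g.2.1)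

/-- The alphabet `X = Y ⊔ Z`, `Y = {yⁱ_n : n ∈ ℤ}`, `Z = {zⁱ_k : k ∈ K}`, `i ∈ {1,2}`
(`i = 1` encoded as `false`, `i = 2` as `true`). -/
inductive Letter (H : Type) : Type
  | y : Bool → ℤ → Letter H
  | z : Bool → KK H → Letter H

/-- The letter action `α : G × X → X`:
`α(g, yⁱ_n) = yⁱ_{ζᵢ(g)+n}` and `α(g, zⁱ_k) = zⁱ_{πᵢ(g)·k}`. -/
def actL {H : Type} [Group H] (g : GG H) : Letter H → Letter H
  | Letter.y false n => Letter.y false (zeta1 g + n)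
  | Letter.y true n => Letter.y true (zeta2 g + n)
  | Letter.z false k => Letter.z false (pi1 g * k)
  | Letter.z true k => Letter.z true (pi2 g * k)

/-- The restriction `ρ : G × X → G`: `ρ(g, yⁱ_n) = τ(g)` and `ρ(g, zⁱ_k) = 1`. -/
def resL {H : Type} [Group H] (g : GG H) : Letter H → GG H
  | Letter.y _ _ => tau g
  | Letter.z _ _ => 1

/-- The action of `G` on finite words over `X`:
`g·ε = ε` and `g·(x w) = α(g,x) (ρ(g,x)·w)`. -/
def wact {H : Type} [Group H] : GG H → List (Letter H) → List (Letter H)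
  | _, [] => []
  | g, x :: w => actL g x :: wact (resL g x) w

/-- The restriction of `g ∈ G` along a word: `ρ*(g,ε) = g`, `ρ*(g, x w) = ρ*(ρ(g,x), w)`. -/
def wres {H : Type} [Group H] : GG H → List (Letter H) → GG H
  | g, [] => g
  | g, x :: w => wres (resL g x) w

/-!
An element `c` of `ℤ² ⊆ G` has trivial `F`-component, so `τ(c) = 1` and `ρ(c, x) = 1` for every
letter `x`; since `1` acts trivially, `c` only changes the first letter of a word. On a letter
`xⁱ`, the generator `(1,0)` moves only letters with `i = 1` and `(0,1)` only those with `i = 2`,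
so one of them fixes `x` while the other acts on it as `(1,1)`.
-/

open Multiplicative

section

variable {H : Type} [Group H]

lemma tau_eq_one_of_snd_fst_eq_one {g : GG H} (hg : g.2.1 = 1) : tau g = 1 := by
  simp [tau, hg]

lemma resL_eq_one_of_snd_fst_eq_one {g : GG H} (hg : g.2.1 = 1) (x : Letter H) :
    resL g x = 1 := by
  cases x <;> simp [resL, tau_eq_one_of_snd_fst_eq_one hg]

lemma wres_one : ∀ w : List (Letter H), wres 1 w = 1
  | [] => rfl
  | _ :: w => by rw [wres, resL_eq_one_of_snd_fst_eq_one rfl, wres_one w]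

lemma wres_eq_one_of_snd_fst_eq_one {g : GG H} (hg : g.2.1 = 1) :
    ∀ {w : List (Letter H)}, w ≠ [] → wres g w = 1
  | _ :: _, _ => by rw [wres, resL_eq_one_of_snd_fst_eq_one hg, wres_one]

lemma actL_one (x : Letter H) : actL 1 x = x := by
  rcases x with ⟨_ | _, n⟩ | ⟨_ | _, k⟩ <;> simp [actL, zeta1, zeta2, pi1, pi2]

lemma wact_one : ∀ w : List (Letter H), wact 1 w = w
  | [] => rfl
  | _ :: w => by rw [wact, actL_one, resL_eq_one_of_snd_fst_eq_one rfl, wact_one w]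

lemma wact_cons_of_snd_fst_eq_one {g : GG H} (hg : g.2.1 = 1) (x : Letter H)
    (w : List (Letter H)) : wact g (x :: w) = actL g x :: w := by
  rw [wact, resL_eq_one_of_snd_fst_eq_one hg, wact_one]

lemma actL_pair (x : Letter H) :
    ({actL ((1, 1, ofAdd 1, ofAdd 0) : GG H) x, actL ((1, 1, ofAdd 0, ofAdd 1) : GG H) x} :
      Set (Letter H)) = {x, actL ((1, 1, ofAdd 1, ofAdd 1) : GG H) x} := by
  rcases x with ⟨_ | _, n⟩ | ⟨_ | _, k⟩ <;>
    simp [actL, zeta1, zeta2, pi1, pi2, Prod.mk_one_one, Set.pair_comm]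

end

/-- For every `c ∈ ℤ² ⊆ G` and letter `x`, `ρ(c,x) = 1`, hence `ρ*(c,w) = 1` for every nonempty
word `w`; moreover for every nonempty word `w` the unordered pair `{(1,0)·w, (0,1)·w}` equals
the unordered pair `{w, (1,1)·w}`. -/
theorem stmt9 (H : Type) [Group H] :
    (∀ (n m : ℤ) (x : Letter H),
      resL ((1, 1, Multiplicative.ofAdd n, Multiplicative.ofAdd m) : GG H) x = 1) ∧
    (∀ (n m : ℤ) (w : List (Letter H)), w ≠ [] →
      wres ((1, 1, Multiplicative.ofAdd n, Multiplicative.ofAdd m) : GG H) w = 1) ∧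
    (∀ w : List (Letter H), w ≠ [] →
      ({wact ((1, 1, Multiplicative.ofAdd 1, Multiplicative.ofAdd 0) : GG H) w,
        wact ((1, 1, Multiplicative.ofAdd 0, Multiplicative.ofAdd 1) : GG H) w} :
          Set (List (Letter H))) =
      {w, wact ((1, 1, Multiplicative.ofAdd 1, Multiplicative.ofAdd 1) : GG H) w}) := by
  refine ⟨fun _ _ => resL_eq_one_of_snd_fst_eq_one rfl,
    fun _ _ _ => wres_eq_one_of_snd_fst_eq_one rfl, ?_⟩
  rintro (_ | ⟨x, w⟩) hw
  · exact absurd rfl hw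
  simp only [wact_cons_of_snd_fst_eq_one (g := ((1, 1, _, _) : GG H)) rfl]
  simpa only [Set.image_pair] using congrArg (Set.image (· :: w)) (actL_pair x)
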